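/- For any probability measure D on X×Y and any probability measure Q on H with r_D(Q) < 1/2, if r_D(Q) > d_D(Q) then 2·r_D(Q) ≤ C_D(Q) ≤ 4·e_D(Q), where C_D(Q) = 1 − (1 − 2·r_D(Q))² / (1 − 2·d_D(Q)). -/

import Mathlib

open MeasureTheory

variable {X H : Type*} [MeasurableSpace X] [MeasurableSpace H]

/-- Gibbs risk: `r_D(Q) = E_{h~Q} P_{(x,y)~D}[h(x) ≠ y]`. -/
noncomputable def gibbsRisk (D : Measure (X × ℝ)) (Q : Measure H) (f : H → X → ℝ) : ℝ :=
  ∫ h, (D {p | f h p.1 ≠ p.2}).toReal ∂Q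

/-- Expected disagreement: `d_D(Q) = E_{h1~Q} E_{h2~Q} P_{x~D_X}[h1(x) ≠ h2(x)]`. -/
noncomputable def disagreement (D : Measure (X × ℝ)) (Q : Measure H) (f : H → X → ℝ) : ℝ :=
  ∫ h₁, ∫ h₂, ((D.map Prod.fst) {x | f h₁ x ≠ f h₂ x}).toReal ∂Q ∂Q

/-- Expected joint error: `e_D(Q) = E_{h1~Q} E_{h2~Q} P_{(x,y)~D}[h1(x) ≠ y ∧ h2(x) ≠ y]`. -/
noncomputable def jointError (D : Measure (X × ℝ)) (Q : Measure H) (f : H → X → ℝ) : ℝ :=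
  ∫ h₁, ∫ h₂, (D {p | f h₁ p.1 ≠ p.2 ∧ f h₂ p.1 ≠ p.2}).toReal ∂Q ∂Q

/-! For ±1-valued voters and labels, two voters disagree exactly when one of them errs and the
other does not, so `P[h₁ errs] + P[h₂ errs] = 2 P[both err] + P[h₁ ≠ h₂]`; averaging over
`h₁, h₂ ~ Q` gives `r = e + d / 2`. With `a = 1 - 2r` and `b = 1 - 2d > 0`, the C-bound is
`1 - a² / b`: the lower bound `1 - a ≤ 1 - a² / b` is `a ≤ b`, and the upper bound
`1 - a² / b ≤ 4e = 1 - 2a + b` is `(a - b)² ≥ 0`. -/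

open scoped symmDiff

section General

variable {α β : Type*} [MeasurableSpace α] [MeasurableSpace β]

theorem measureReal_add_measureReal_eq_two_mul_inter_add_symmDiff {μ : Measure α}
    [IsFiniteMeasure μ] {s t : Set α} (hs : MeasurableSet s) (ht : MeasurableSet t) :
    μ.real s + μ.real t = 2 * μ.real (s ∩ t) + μ.real (s ∆ t) := by
  rw [measureReal_symmDiff_eq hs ht, ← measureReal_sdiff_add_inter (μ := μ) (s := s) ht,
    ← measureReal_sdiff_add_inter (μ := μ) (s := t) hs, Set.inter_comm t s]
  ring

theorem integrable_measureReal_prodMk_left {μ : Measure α} {ν : Measure β}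
    [IsFiniteMeasure μ] [IsFiniteMeasure ν] {s : Set (α × β)} (hs : MeasurableSet s) :
    Integrable (fun a => ν.real (Prod.mk a ⁻¹' s)) μ :=
  .of_bound (measurable_measure_prodMk_left hs).ennreal_toReal.aestronglyMeasurable
    (ν.real .univ)
    (.of_forall fun _ => by
      rw [Real.norm_of_nonneg measureReal_nonneg]; exact measureReal_mono (Set.subset_univ _))

theorem measurableSet_ne_fun {γ : Type*} [MeasurableSpace γ] [MeasurableEq γ] {u v : α → γ}
    (hu : Measurable u) (hv : Measurable v) : MeasurableSet {x | u x ≠ v x} :=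
  (measurableSet_eq_fun hu hv).compl

theorem two_mul_integral_eq_of_add_eq {Q : Measure α} [IsProbabilityMeasure Q] {g : α → ℝ}
    {k c : α → α → ℝ} (hg : Integrable g Q)
    (hk : Integrable (Function.uncurry k) (Q.prod Q))
    (hc : Integrable (Function.uncurry c) (Q.prod Q))
    (hgkc : ∀ a b, g a + g b = 2 * k a b + c a b) :
    2 * ∫ a, g a ∂Q = 2 * ∫ a, ∫ b, k a b ∂Q ∂Q + ∫ a, ∫ b, c a b ∂Q ∂Q := by
  have hg₁ : Integrable (fun z : α × α => g z.1) (Q.prod Q) := hg.comp_fst Q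
  have hg₂ : Integrable (fun z : α × α => g z.2) (Q.prod Q) := hg.comp_snd Q
  calc 2 * ∫ a, g a ∂Q = ∫ z, (g z.1 + g z.2) ∂Q.prod Q := by
        rw [integral_add hg₁ hg₂, integral_fun_fst, integral_fun_snd, probReal_univ, one_smul]
        ring
    _ = ∫ z, (2 * Function.uncurry k z + Function.uncurry c z) ∂Q.prod Q :=
        integral_congr_ae (.of_forall fun z => hgkc z.1 z.2)
    _ = _ := by
        rw [integral_add (hk.const_mul 2) hc, integral_const_mul, integral_prod _ hk,
          integral_prod _ hc]
        rfl

theorem ne_iff_xor_ne_of_mem_pair {γ : Type*} {u v a b y : γ} (ha : a = u ∨ a = v)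
    (hb : b = u ∨ b = v) (hy : y = u ∨ y = v) : a ≠ b ↔ Xor (a ≠ y) (b ≠ y) := by
  rcases ha with rfl | rfl <;> rcases hb with rfl | rfl <;> rcases hy with rfl | rfl <;>
    simp [Xor, ne_comm]

theorem measureReal_ne_add_measureReal_ne {μ : Measure (α × ℝ)}
    [IsFiniteMeasure μ] {u v : α → ℝ} (hu : Measurable u) (hv : Measurable v)
    (hu₁ : ∀ x, u x = 1 ∨ u x = -1) (hv₁ : ∀ x, v x = 1 ∨ v x = -1)
    (hlabels : ∀ᵐ p ∂μ, p.2 = 1 ∨ p.2 = -1) :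
    μ.real {p | u p.1 ≠ p.2} + μ.real {p | v p.1 ≠ p.2} =
      2 * μ.real {p | u p.1 ≠ p.2 ∧ v p.1 ≠ p.2} +
        (μ.map Prod.fst).real {x | u x ≠ v x} := by
  have hA : MeasurableSet {p : α × ℝ | u p.1 ≠ p.2} :=
    measurableSet_ne_fun (hu.comp measurable_fst) measurable_snd
  have hB : MeasurableSet {p : α × ℝ | v p.1 ≠ p.2} :=
    measurableSet_ne_fun (hv.comp measurable_fst) measurable_snd
  rw [measureReal_add_measureReal_eq_two_mul_inter_add_symmDiff hA hB,
    map_measureReal_apply measurable_fst (measurableSet_ne_fun hu hv)]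
  congr 1
  refine measureReal_congr ?_
  filter_upwards [hlabels] with p hp
  exact propext (ne_iff_xor_ne_of_mem_pair (hu₁ p.1) (hv₁ p.1) hp).symm

end General

noncomputable def cBound (r d : ℝ) : ℝ := 1 - (1 - 2 * r) ^ 2 / (1 - 2 * d)

theorem two_mul_le_cBound {r d : ℝ} (hr : r < 1 / 2) (hdr : d ≤ r) : 2 * r ≤ cBound r d := by
  have hb : 0 < 1 - 2 * d := by linarith
  rw [cBound, le_sub_comm, div_le_iff₀ hb]
  nlinarith

theorem cBound_le {r d : ℝ} (hd : d < 1 / 2) : cBound r d ≤ 4 * r - 2 * d := by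
  have hb : 0 < 1 - 2 * d := by linarith
  rw [cBound, sub_le_comm, le_div_iff₀ hb]
  nlinarith [sq_nonneg (2 * r - 2 * d)]

theorem gibbsRisk_eq_jointError_add_disagreement_div_two
    (D : Measure (X × ℝ)) [IsFiniteMeasure D]
    (Q : Measure H) [IsProbabilityMeasure Q] (f : H → X → ℝ)
    (hf : Measurable fun p : H × X => f p.1 p.2) (hvals : ∀ h x, f h x = 1 ∨ f h x = -1)
    (hlabels : ∀ᵐ p ∂D, p.2 = 1 ∨ p.2 = -1) :
    gibbsRisk D Q f = jointError D Q f + disagreement D Q f / 2 := by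
  have hsec : ∀ h, Measurable (f h) := fun h => hf.comp measurable_prodMk_left
  have hErr : MeasurableSet {q : H × (X × ℝ) | f q.1 q.2.1 ≠ q.2.2} :=
    measurableSet_ne_fun (hf.comp (measurable_fst.prodMk measurable_snd.fst))
      measurable_snd.snd
  have hErr₁ : MeasurableSet {q : (H × H) × (X × ℝ) | f q.1.1 q.2.1 ≠ q.2.2} :=
    measurableSet_ne_fun (hf.comp (measurable_fst.fst.prodMk measurable_snd.fst))
      measurable_snd.snd
  have hErr₂ : MeasurableSet {q : (H × H) × (X × ℝ) | f q.1.2 q.2.1 ≠ q.2.2} :=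
    measurableSet_ne_fun (hf.comp (measurable_fst.snd.prodMk measurable_snd.fst))
      measurable_snd.snd
  have hDis : MeasurableSet {q : (H × H) × X | f q.1.1 q.2 ≠ f q.1.2 q.2} :=
    measurableSet_ne_fun (hf.comp (measurable_fst.fst.prodMk measurable_snd))
      (hf.comp (measurable_fst.snd.prodMk measurable_snd))
  have key := two_mul_integral_eq_of_add_eq (Q := Q) (g := fun h => D.real {p | f h p.1 ≠ p.2})
    (k := fun h₁ h₂ => D.real {p | f h₁ p.1 ≠ p.2 ∧ f h₂ p.1 ≠ p.2})
    (c := fun h₁ h₂ => (D.map Prod.fst).real {x | f h₁ x ≠ f h₂ x})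
    (integrable_measureReal_prodMk_left hErr)
    (integrable_measureReal_prodMk_left (hErr₁.inter hErr₂))
    (integrable_measureReal_prodMk_left hDis)
    fun h₁ h₂ =>
      measureReal_ne_add_measureReal_ne (hsec h₁) (hsec h₂) (hvals h₁) (hvals h₂) hlabels
  simp only [gibbsRisk, jointError, disagreement, ← measureReal_def]
  linarith

/-- If `r_D(Q) < 1/2` and `r_D(Q) > d_D(Q)` then `2·r_D(Q) ≤ C_D(Q) ≤ 4·e_D(Q)`,
where `C_D(Q) = 1 − (1 − 2·r_D(Q))²/(1 − 2·d_D(Q))`. -/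
theorem two_gibbs_le_cbound_le_four_jointError
    (D : Measure (X × ℝ)) [IsProbabilityMeasure D]
    (Q : Measure H) [IsProbabilityMeasure Q]
    (f : H → X → ℝ)
    (hf : Measurable fun p : H × X => f p.1 p.2)
    (hvals : ∀ h x, f h x = 1 ∨ f h x = -1)
    (hlabels : ∀ᵐ p ∂D, p.2 = 1 ∨ p.2 = -1)
    (hr : gibbsRisk D Q f < 1 / 2)
    (hrd : disagreement D Q f < gibbsRisk D Q f) :
    2 * gibbsRisk D Q f ≤
        1 - (1 - 2 * gibbsRisk D Q f) ^ 2 / (1 - 2 * disagreement D Q f) ∧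
    1 - (1 - 2 * gibbsRisk D Q f) ^ 2 / (1 - 2 * disagreement D Q f) ≤
        4 * jointError D Q f := by
  have hre := gibbsRisk_eq_jointError_add_disagreement_div_two D Q f hf hvals hlabels
  exact ⟨two_mul_le_cBound hr hrd.le,
    (cBound_le (by linarith)).trans_eq (by rw [hre]; ring)⟩
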